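/- arXiv:1901.04852 — 6 statements merged into one kernel-verified Lean document; each statement's English description precedes it below -/
import Mathlib

section
/- Let $v\in\mathbb{Z}^n$ and define $\overline{v}\in\mathbb{Q}(q,t)^n$ by $\overline{v}_i = q^{v_i} t^{-k_i(v)}$ where $k_i(v) = \#\{k<i : v_k\geq v_i\} + \#\{k>i : v_k > v_i\}$. If $1\leq i<n$ and $v_i \neq v_{i+1}$, then $s_i(\overline{v}) = \overline{s_i v}$, where $s_i$ acts on $n$-tuples by swapping the $i$-th and $(i+1)$-st entries. -/
open Finset

/-- `k_i(v) = #{k<i : v_k ≥ v_i} + #{k>i : v_k > v_i}`. -/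
def kwt {n : ℕ} (v : Fin n → ℤ) (i : Fin n) : ℕ :=
  ((univ : Finset (Fin n)).filter (fun k => k < i ∧ v i ≤ v k)).card +
  ((univ : Finset (Fin n)).filter (fun k => i < k ∧ v i < v k)).card

/-- `v̄_i = q^{v_i} t^{-k_i(v)}`. -/
noncomputable def vbar {F : Type} [Field F] (q t : F) {n : ℕ} (v : Fin n → ℤ)
    (i : Fin n) : F :=
  q ^ (v i) * t ^ (-(kwt v i : ℤ))

lemma kwt_eq {n : ℕ} (v : Fin n → ℤ) (i : Fin n) :
    kwt v i = ((univ : Finset (Fin n)).filter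
      (fun k => (k < i ∧ v i ≤ v k) ∨ (i < k ∧ v i < v k))).card := by
  rw [kwt, filter_or, card_union_of_disjoint]
  rw [Finset.disjoint_left]
  rintro k hk1 hk2
  simp only [mem_filter] at hk1 hk2
  exact absurd (hk1.2.1.trans hk2.2.1) (lt_irrefl _)

lemma kwt_swap {n : ℕ} (v : Fin n → ℤ) (i : ℕ) (hi : i + 1 < n)
    (hv : v ⟨i, Nat.lt_of_succ_lt hi⟩ ≠ v ⟨i + 1, hi⟩) (j : Fin n) :
    kwt v (Equiv.swap ⟨i, Nat.lt_of_succ_lt hi⟩ ⟨i + 1, hi⟩ j)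
      = kwt (fun k => v (Equiv.swap ⟨i, Nat.lt_of_succ_lt hi⟩ ⟨i + 1, hi⟩ k)) j := by
  set a : Fin n := ⟨i, Nat.lt_of_succ_lt hi⟩ with ha
  set b : Fin n := ⟨i + 1, hi⟩ with hb
  set σ := Equiv.swap a b with hσ
  have hab : a < b := by simp [ha, hb, Fin.lt_def]
  have hba : ¬ b < a := fun h => absurd (hab.trans h) (lt_irrefl _)
  rw [kwt_eq, kwt_eq]
  -- reindex LHS by σ
  rw [show ((univ : Finset (Fin n)).filter
      (fun k => (k < σ j ∧ v (σ j) ≤ v k) ∨ (σ j < k ∧ v (σ j) < v k))).card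
    = ((univ : Finset (Fin n)).filter
      (fun m => (σ m < σ j ∧ v (σ j) ≤ v (σ m)) ∨ (σ j < σ m ∧ v (σ j) < v (σ m)))).card from
    (Finset.card_bij' (fun m _ => σ m) (fun k _ => σ.symm k)
      (by intro m hm; simp only [mem_filter] at hm ⊢; exact ⟨mem_univ _, hm.2⟩)
      (by intro k hk; simp only [mem_filter] at hk ⊢;
          exact ⟨mem_univ _, by simpa using hk.2⟩)
      (by intro m _; simp) (by intro k _; simp)).symm]
  congr 1
  apply filter_congr
  intro m _
  have key : ∀ x : Fin n, x ≠ a → x ≠ b → (x < a ↔ x < b) ∧ (a < x ↔ b < x) := by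
    intro x hx1 hx2
    have h1 : (x : ℕ) ≠ i := fun h => hx1 (Fin.ext h)
    have h2 : (x : ℕ) ≠ i + 1 := fun h => hx2 (Fin.ext h)
    simp only [Fin.lt_def, ha, hb]
    omega
  have hsa : σ a = b := Equiv.swap_apply_left a b
  have hsb : σ b = a := Equiv.swap_apply_right a b
  rcases eq_or_ne m a with rfl | hma <;> rcases eq_or_ne j a with rfl | hja
  · simp
  · rcases eq_or_ne j b with rfl | hjb
    · -- m = a, j = b : the interesting case
      rw [hsa, hsb]
      have hne : v a ≠ v b := hv
      constructor
      · rintro (⟨h1, h2⟩ | ⟨h1, h2⟩)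
        · exact absurd h1 hba
        · exact Or.inl ⟨hab, le_of_lt h2⟩
      · rintro (⟨h1, h2⟩ | ⟨h1, h2⟩)
        · exact Or.inr ⟨hab, lt_of_le_of_ne h2 (hne)⟩
        · exact absurd h1 hba
    · -- m = a, j ∉ {a,b}
      have hjσ : σ j = j := Equiv.swap_apply_of_ne_of_ne hja hjb
      obtain ⟨hk1, hk2⟩ := key j hja hjb
      rw [hsa, hjσ, hk1, hk2]
  · rcases eq_or_ne m b with rfl | hmb
    · -- m = b, j = a : the other interesting case
      rw [hsa, hsb]
      have hne : v a ≠ v b := hv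
      constructor
      · rintro (⟨h1, h2⟩ | ⟨h1, h2⟩)
        · exact Or.inr ⟨hab, lt_of_le_of_ne h2 (Ne.symm hne)⟩
        · exact absurd h1 hba
      · rintro (⟨h1, h2⟩ | ⟨h1, h2⟩)
        · exact absurd h1 hba
        · exact Or.inl ⟨hab, le_of_lt h2⟩
    · -- j = a, m ∉ {a,b}
      have hmσ : σ m = m := Equiv.swap_apply_of_ne_of_ne hma hmb
      obtain ⟨hk1, hk2⟩ := key m hma hmb
      rw [hsa, hmσ, ← hk1, ← hk2]
  · rcases eq_or_ne m b with rfl | hmb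
    · rcases eq_or_ne j b with rfl | hjb
      · simp
      · -- m = b, j ∉ {a,b}
        have hjσ : σ j = j := Equiv.swap_apply_of_ne_of_ne hja hjb
        obtain ⟨hk1, hk2⟩ := key j hja hjb
        rw [hsb, hjσ, ← hk1, ← hk2]
    · rcases eq_or_ne j b with rfl | hjb
      · -- j = b, m ∉ {a,b}
        have hmσ : σ m = m := Equiv.swap_apply_of_ne_of_ne hma hmb
        obtain ⟨hk1, hk2⟩ := key m hma hmb
        rw [hsb, hmσ, hk1, hk2]
      · -- neither in {a,b}
        have hmσ : σ m = m := Equiv.swap_apply_of_ne_of_ne hma hmb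
        have hjσ : σ j = j := Equiv.swap_apply_of_ne_of_ne hja hjb
        rw [hmσ, hjσ]

/-- If `v_i ≠ v_{i+1}` then `s_i(v̄) = overline{s_i v}`. -/
theorem stmt0 {F : Type} [Field F] (q t : F) (hq : q ≠ 0) (ht : t ≠ 0)
    {n : ℕ} (v : Fin n → ℤ) (i : ℕ) (hi : i + 1 < n)
    (hv : v ⟨i, Nat.lt_of_succ_lt hi⟩ ≠ v ⟨i + 1, hi⟩) :
    (fun j : Fin n =>
        vbar q t v (Equiv.swap ⟨i, Nat.lt_of_succ_lt hi⟩ ⟨i + 1, hi⟩ j))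
      = vbar q t
          (fun j : Fin n => v (Equiv.swap ⟨i, Nat.lt_of_succ_lt hi⟩ ⟨i + 1, hi⟩ j)) := by
  funext j
  simp only [vbar]
  rw [kwt_swap v i hi hv j]
end

section
/- Let $J$ be the automorphism of $F(x_1,\ldots,x_n)$ inverting all variables, $(Jf)(x) = f(x_1^{-1},\ldots,x_n^{-1})$, let $H_i$ be the Demazure–Lusztig operator with parameter $t$, and let $H_i^\circ$ be the same operator with $t$ replaced by $t^{-1}$. Then $J H_i J = (H_i^\circ)^{-1}$. -/
open MvPolynomial

/-- The Demazure–Lusztig operator with parameter `t`: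
`H f = t·(s f) - ((1-t)x_i/(x_i - x_{i'}))·(f - s f)` on `F(x_1,…,x_n)`,
where `s` is the field homomorphism interchanging `x_i` and `x_{i'}`.
The operator `H_i°` (parameter `t` replaced by `t⁻¹`) is `DLop t⁻¹ i i' s`. -/
noncomputable def DLop {F : Type} [Field F] {n : ℕ} (t : F) (i i' : Fin n)
    (s : FractionRing (MvPolynomial (Fin n) F) →+*
         FractionRing (MvPolynomial (Fin n) F))
    (f : FractionRing (MvPolynomial (Fin n) F)) :
    FractionRing (MvPolynomial (Fin n) F) :=
  algebraMap (MvPolynomial (Fin n) F) _ (C t) * s f -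
    ((1 - algebraMap (MvPolynomial (Fin n) F) _ (C t)) *
        algebraMap (MvPolynomial (Fin n) F) _ (X i) /
      (algebraMap (MvPolynomial (Fin n) F) _ (X i) -
        algebraMap (MvPolynomial (Fin n) F) _ (X i'))) * (f - s f)

lemma key_field_identity {K : Type*} [Field K] (x y c u v : K) (hx : x ≠ 0) (hy : y ≠ 0)
    (hxy : x ≠ y) (hc : c ≠ 0) :
    c * v - (1 - c) * x⁻¹ / (x⁻¹ - y⁻¹) * (u - v)
      = c * ((c⁻¹ * v - (1 - c⁻¹) * x / (x - y) * (u - v)) + u - c⁻¹ * u) := by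
  have h1 : x - y ≠ 0 := sub_ne_zero.mpr hxy
  have h2 : x⁻¹ - y⁻¹ ≠ 0 := sub_ne_zero.mpr (fun h => hxy (inv_injective h))
  have h3 : x⁻¹ / (x⁻¹ - y⁻¹) = -y / (x - y) := by
    rw [div_eq_div_iff h2 h1]
    field_simp
    ring
  rw [mul_div_assoc, h3]
  field_simp
  ring

set_option maxHeartbeats 1000000 in
set_option synthInstance.maxHeartbeats 400000 in
/-- `J H_i J = (H_i°)⁻¹`, where `J` inverts all the variables and, by the
quadratic relation, `(H_i°)⁻¹ = t(H_i° + 1 - t⁻¹)`; i.e.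
`J(H_i(J f)) = t·(H_i° f + f - t⁻¹ f)` for all `f`. -/
theorem stmt9 {F : Type} [Field F] {n : ℕ} (t : F) (ht : t ≠ 0)
    (i : ℕ) (hi : i + 1 < n)
    (s J : FractionRing (MvPolynomial (Fin n) F) →+*
           FractionRing (MvPolynomial (Fin n) F))
    (hs : ∀ p : MvPolynomial (Fin n) F,
      s (algebraMap (MvPolynomial (Fin n) F)
          (FractionRing (MvPolynomial (Fin n) F)) p)
        = algebraMap (MvPolynomial (Fin n) F)
            (FractionRing (MvPolynomial (Fin n) F))
            (rename (fun k =>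
              Equiv.swap ⟨i, Nat.lt_of_succ_lt hi⟩ ⟨i + 1, hi⟩ k) p))
    (hJC : ∀ a : F,
      J (algebraMap (MvPolynomial (Fin n) F)
          (FractionRing (MvPolynomial (Fin n) F)) (C a))
        = algebraMap (MvPolynomial (Fin n) F)
            (FractionRing (MvPolynomial (Fin n) F)) (C a))
    (hJX : ∀ j : Fin n,
      J (algebraMap (MvPolynomial (Fin n) F)
          (FractionRing (MvPolynomial (Fin n) F)) (X j))
        = (algebraMap (MvPolynomial (Fin n) F)
            (FractionRing (MvPolynomial (Fin n) F)) (X j))⁻¹)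
    (f : FractionRing (MvPolynomial (Fin n) F)) :
    J (DLop t ⟨i, Nat.lt_of_succ_lt hi⟩ ⟨i + 1, hi⟩ s (J f))
      = algebraMap (MvPolynomial (Fin n) F) _ (C t) *
          (DLop t⁻¹ ⟨i, Nat.lt_of_succ_lt hi⟩ ⟨i + 1, hi⟩ s f + f -
            (algebraMap (MvPolynomial (Fin n) F) _ (C t))⁻¹ * f) := by
  set A := algebraMap (MvPolynomial (Fin n) F) (FractionRing (MvPolynomial (Fin n) F)) with hA
  -- J ∘ J = id
  have hJJ : ∀ g, J (J g) = g := by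
    have h1 : (J.comp J).comp A
        = (RingHom.id (FractionRing (MvPolynomial (Fin n) F))).comp A := by
      apply MvPolynomial.ringHom_ext
      · intro a; simp [hJC]
      · intro j; simp [hJX, map_inv₀]
    have := IsLocalization.ringHom_ext (nonZeroDivisors (MvPolynomial (Fin n) F)) h1
    intro g; exact RingHom.congr_fun this g
  -- J ∘ s = s ∘ J
  have hJs : ∀ g, J (s g) = s (J g) := by
    have h1 : (J.comp s).comp A = (s.comp J).comp A := by
      apply MvPolynomial.ringHom_ext
      · intro a; simp [hs, hJC, map_inv₀]
      · intro j; simp [hs, hJX, map_inv₀]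
    have := IsLocalization.ringHom_ext (nonZeroDivisors (MvPolynomial (Fin n) F)) h1
    intro g; exact RingHom.congr_fun this g
  have hJsJ : J (s (J f)) = s f := by rw [hJs, hJJ]
  have hinj : Function.Injective A := IsFractionRing.injective _ _
  have hx : A (X (⟨i, Nat.lt_of_succ_lt hi⟩ : Fin n)) ≠ 0 :=
    (map_ne_zero_iff A hinj).mpr (X_ne_zero _)
  have hy : A (X (⟨i + 1, hi⟩ : Fin n)) ≠ 0 :=
    (map_ne_zero_iff A hinj).mpr (X_ne_zero _)
  have hxy : A (X (⟨i, Nat.lt_of_succ_lt hi⟩ : Fin n))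
      ≠ A (X (⟨i + 1, hi⟩ : Fin n)) := by
    intro h
    have h2 := hinj h
    have h3 := MvPolynomial.X_injective h2
    simp [Fin.ext_iff] at h3
  have hc : A (C t) ≠ 0 := (map_ne_zero_iff A hinj).mpr (by simp [ht])
  have hct : A (C t⁻¹) = (A (C t))⁻¹ := by
    refine eq_inv_of_mul_eq_one_left ?_
    rw [← map_mul, ← C_mul, inv_mul_cancel₀ ht, C_1, map_one]
  simp only [DLop, map_sub, map_mul, map_div₀, map_one, hJC, hJX, hJsJ, hJJ, hct, ← hA]
  exact key_field_identity _ _ _ f (s f) hx hy hxy hc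
end

section
/- Let $w_0$ denote the longest element of $S_n$, acting on $F(x_1,\ldots,x_n)$ by $x_i \mapsto x_{n+1-i}$. With $H_i$ and $H_i^\circ$ the Demazure–Lusztig operators at parameters $t$ and $t^{-1}$ respectively, one has $w_0 H_i w_0 = (H_{n-i}^\circ)^{-1}$ for $1\leq i < n$. -/
/-!
Conjugation by `w₀` carries `x_i, x_{i+1}` to `x_{n+1-i}, x_{n-i}` and `s_i` to `s_{n-i}`, so
`w₀ H_i w₀` is the Demazure–Lusztig operator at parameter `t` for `s_{n-i}`, but with its
divided difference taken with respect to `x_{n+1-i}` instead of `x_{n-i}`. Exchanging the two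
variables in this way turns `H` at parameter `t` into `t(H° + 1 - t⁻¹)`: the two
divided-difference terms differ by `(1-t)(x_a - x_b)/(x_a - x_b)·(f - s f) = (1-t)(f - s f)`.
-/

open MvPolynomial

theorem RingHom.map_algebraMap_eq_rename {σ F K : Type*} [CommSemiring F] [CommSemiring K]
    [Algebra (MvPolynomial σ F) K] (φ : K →+* K) (e : σ → σ)
    (hC : ∀ a : F, φ (algebraMap (MvPolynomial σ F) K (C a)) =
      algebraMap (MvPolynomial σ F) K (C a))
    (hX : ∀ j : σ, φ (algebraMap (MvPolynomial σ F) K (X j)) =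
      algebraMap (MvPolynomial σ F) K (X (e j)))
    (p : MvPolynomial σ F) :
    φ (algebraMap _ K p) = algebraMap _ K (rename e p) := by
  have hcomp : φ.comp (algebraMap _ K) = (algebraMap _ K).comp (rename e).toRingHom :=
    MvPolynomial.ringHom_ext (by simpa using hC) (by simpa using hX)
  exact RingHom.congr_fun hcomp p

theorem IsLocalization.ringHom_ext_apply {R S P : Type*} [CommSemiring R] (M : Submonoid R)
    [CommSemiring S] [Algebra R S] [IsLocalization M S] [Semiring P] {φ ψ : S →+* P}
    (h : ∀ p, φ (algebraMap R S p) = ψ (algebraMap R S p)) (x : S) : φ x = ψ x :=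
  RingHom.congr_fun (IsLocalization.ringHom_ext M (RingHom.ext h)) x

section DemazureLusztig

variable {F : Type} [Field F] {n : ℕ}

local notation "K" => FractionRing (MvPolynomial (Fin n) F)
local notation "ι" => algebraMap (MvPolynomial (Fin n) F) (FractionRing (MvPolynomial (Fin n) F))

theorem algebraMap_X_sub_X_ne_zero {a b : Fin n} (hab : a ≠ b) : ι (X a) - ι (X b) ≠ 0 := by
  rw [sub_ne_zero, (IsFractionRing.injective _ K).ne_iff]
  exact (X_injective (R := F)).ne hab

theorem map_DLop (W s s' : K →+* K) (t : F) {a b c d : Fin n} (hC : W (ι (C t)) = ι (C t))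
    (ha : W (ι (X a)) = ι (X c)) (hb : W (ι (X b)) = ι (X d)) (hs : ∀ x, W (s x) = s' (W x))
    (g : K) : W (DLop t a b s g) = DLop t c d s' (W g) := by
  simp only [DLop, map_sub, map_mul, map_div₀, map_one, hC, ha, hb, hs]

theorem DLop_swap {t : F} (ht : t ≠ 0) {a b : Fin n} (hab : a ≠ b) (s : K →+* K) (f : K) :
    DLop t b a s f = ι (C t) * (DLop t⁻¹ a b s f + f - (ι (C t))⁻¹ * f) := by
  have hT : ι (C t) ≠ 0 := map_ne_zero ((ι).comp C) |>.mpr ht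
  have hT' : ι (C t⁻¹) = (ι (C t))⁻¹ := map_inv₀ ((ι).comp C) t
  have hab' := algebraMap_X_sub_X_ne_zero (F := F) hab
  have hba := algebraMap_X_sub_X_ne_zero (F := F) hab.symm
  simp only [DLop, hT']
  field_simp
  ring

end DemazureLusztig

/-- `w₀ H_i w₀ = (H_{n-i}°)⁻¹` for `1 ≤ i < n` (here written with the 0-based
index `i` running over `i + 1 < n`, so the 1-based index is `i+1` and
`n - (i+1)` corresponds to the 0-based pair `(n-2-i, n-1-i)`); `w₀` is the
field homomorphism reversing the variables, and by the quadratic relation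
`(H_j°)⁻¹ = t(H_j° + 1 - t⁻¹)`, so the claim reads
`w₀(H_i(w₀ f)) = t·(H_{n-i}° f + f - t⁻¹ f)` for all `f`. -/
theorem stmt10 {F : Type} [Field F] {n : ℕ} (t : F) (ht : t ≠ 0)
    (i : ℕ) (hi : i + 1 < n)
    (s s' W : FractionRing (MvPolynomial (Fin n) F) →+*
              FractionRing (MvPolynomial (Fin n) F))
    (hs : ∀ p : MvPolynomial (Fin n) F,
      s (algebraMap (MvPolynomial (Fin n) F)
          (FractionRing (MvPolynomial (Fin n) F)) p)
        = algebraMap (MvPolynomial (Fin n) F)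
            (FractionRing (MvPolynomial (Fin n) F))
            (rename (fun k =>
              Equiv.swap ⟨i, Nat.lt_of_succ_lt hi⟩ ⟨i + 1, hi⟩ k) p))
    (hs' : ∀ p : MvPolynomial (Fin n) F,
      s' (algebraMap (MvPolynomial (Fin n) F)
          (FractionRing (MvPolynomial (Fin n) F)) p)
        = algebraMap (MvPolynomial (Fin n) F)
            (FractionRing (MvPolynomial (Fin n) F))
            (rename (fun k =>
              Equiv.swap ⟨n - 2 - i, by omega⟩ ⟨n - 1 - i, by omega⟩ k) p))
    (hWC : ∀ a : F,
      W (algebraMap (MvPolynomial (Fin n) F)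
          (FractionRing (MvPolynomial (Fin n) F)) (C a))
        = algebraMap (MvPolynomial (Fin n) F)
            (FractionRing (MvPolynomial (Fin n) F)) (C a))
    (hWX : ∀ j : Fin n,
      W (algebraMap (MvPolynomial (Fin n) F)
          (FractionRing (MvPolynomial (Fin n) F)) (X j))
        = algebraMap (MvPolynomial (Fin n) F)
            (FractionRing (MvPolynomial (Fin n) F))
            (X (⟨n - 1 - (j : ℕ), by have := j.isLt; omega⟩ : Fin n)))
    (f : FractionRing (MvPolynomial (Fin n) F)) :
    W (DLop t ⟨i, Nat.lt_of_succ_lt hi⟩ ⟨i + 1, hi⟩ s (W f))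
      = algebraMap (MvPolynomial (Fin n) F) _ (C t) *
          (DLop t⁻¹ ⟨n - 2 - i, by omega⟩ ⟨n - 1 - i, by omega⟩ s' f + f -
            (algebraMap (MvPolynomial (Fin n) F) _ (C t))⁻¹ * f) := by
  have hrev : ∀ j : Fin n,
      (⟨n - 1 - (j : ℕ), by have := j.isLt; omega⟩ : Fin n) = j.rev := by
    intro j; ext; simp only [Fin.val_rev]; omega
  have hW : ∀ p : MvPolynomial (Fin n) F,
      W (algebraMap _ (FractionRing _) p) = algebraMap _ _ (rename Fin.rev p) :=
    W.map_algebraMap_eq_rename Fin.rev hWC (fun j => by rw [hWX, hrev])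
  have hWW : ∀ x, W (W x) = x := IsLocalization.ringHom_ext_apply (φ := W.comp W)
    (ψ := RingHom.id _) (nonZeroDivisors _) fun p => by
      rw [RingHom.comp_apply, hW, hW, rename_rename, Fin.rev_involutive.comp_self,
        rename_id_apply, RingHom.id_apply]
  have hrev_swap :
      Fin.rev ∘ (fun k => Equiv.swap ⟨i, Nat.lt_of_succ_lt hi⟩ ⟨i + 1, hi⟩ k) =
        (fun k => Equiv.swap ⟨n - 2 - i, by omega⟩ ⟨n - 1 - i, by omega⟩ k) ∘ Fin.rev := by
    funext k
    rw [Function.comp_apply, Fin.rev_injective.map_swap, Equiv.swap_comm]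
    congr 2 <;> ext <;> simp only [Fin.val_rev] <;> omega
  have hWs : ∀ x, W (s x) = s' (W x) := IsLocalization.ringHom_ext_apply (φ := W.comp s)
    (ψ := s'.comp W) (nonZeroDivisors _) fun p => by
      simp only [RingHom.comp_apply]
      rw [hs, hW, hW, hs', rename_rename, rename_rename, hrev_swap]
  rw [map_DLop W s s' t (d := ⟨n - 2 - i, by omega⟩) (hWC t) (by rw [hWX])
    (by rw [hWX]; congr 3; dsimp only; omega) hWs, hWW]
  exact DLop_swap ht (by simp only [ne_eq, Fin.mk.injEq]; omega) s' f
end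

section
/- (One-variable shift relation.) For $n=1$ and $m\in\mathbb{Z}_{\geq 0}$, define $K_{-m}(x) := \frac{(qa;q)_m}{(qx;q)_m}$ and $K_m(x) := (x/a)^m\frac{(x^{-1};q)_m}{(a^{-1};q)_m}$. Then the shift relation $K_{v}(x) = \frac{(q^{1-m}a\,\overline{v}^{-1};q)_m}{(qx;q)_m}\,K_{v+m}(q^m x)$ holds for all $v\in\mathbb{Z}$ with $v+m\geq 0$, where $\overline{v}=q^v$. -/
noncomputable def qPoch {F : Type} [Field F] (y q : F) (m : ℕ) : F :=
  ∏ j ∈ Finset.range m, (1 - q ^ j * y)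

noncomputable def KnormZ {F : Type} [Field F] (q a : F) (v : ℤ) (x : F) : F :=
  if 0 ≤ v then (x / a) ^ v.toNat * qPoch x⁻¹ q v.toNat / qPoch a⁻¹ q v.toNat
  else qPoch (q * a) q (-v).toNat / qPoch (q * x) q (-v).toNat

lemma qPoch_succ {F : Type} [Field F] (y q : F) (m : ℕ) :
    qPoch y q (m + 1) = qPoch y q m * (1 - q ^ m * y) := Finset.prod_range_succ _ _

lemma qPoch_succ' {F : Type} [Field F] (y q : F) (m : ℕ) :
    qPoch y q (m + 1) = (1 - y) * qPoch (q * y) q m := by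
  rw [qPoch, Finset.prod_range_succ']
  simp [qPoch, mul_comm, pow_succ, mul_assoc, mul_left_comm]

lemma step {F : Type} [Field F] (q a x : F)
    (hq : q ≠ 0) (ha : a ≠ 0) (hx : x ≠ 0)
    (hpa : ∀ k : ℕ, qPoch a⁻¹ q k ≠ 0)
    (h1 : 1 - q * x ≠ 0) (v : ℤ) :
    KnormZ q a v x = ((1 - a * (q ^ v)⁻¹) / (1 - q * x)) * KnormZ q a (v + 1) (q * x) := by
  rcases le_or_gt 0 v with hv | hv
  · obtain ⟨n, rfl⟩ := Int.eq_ofNat_of_zero_le hv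
    have hv1 : (0:ℤ) ≤ (n:ℤ) + 1 := by positivity
    have htn : ((n:ℤ) + 1).toNat = n + 1 := by omega
    rw [KnormZ, KnormZ, if_pos hv, if_pos hv1, htn, Int.toNat_natCast]
    rw [qPoch_succ' (q*x)⁻¹ q n, qPoch_succ a⁻¹ q n]
    have hinv : q * (q * x)⁻¹ = x⁻¹ := by field_simp
    rw [hinv, zpow_natCast]
    have h2 : (1 : F) - q ^ n * a⁻¹ ≠ 0 := by
      have := hpa (n+1); rw [qPoch_succ] at this
      exact right_ne_zero_of_mul this
    have h3 := hpa n
    have e1 : (1:F) - a * (q ^ n)⁻¹ = (-(a * (q ^ n)⁻¹)) * (1 - q ^ n * a⁻¹) := by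
      field_simp; ring
    have e2 : (1:F) - (q * x)⁻¹ = (-(q * x)⁻¹) * (1 - q * x) := by
      field_simp
      ring
    rw [e1, e2]
    have hqn : q ^ n ≠ 0 := pow_ne_zero _ hq
    generalize hgs : 1 - q * x = s at h1 ⊢
    generalize hgt : 1 - q ^ n * a⁻¹ = t at h2 ⊢
    generalize hgA : qPoch a⁻¹ q n = A at h3 ⊢
    generalize hgP : qPoch x⁻¹ q n = P
    rw [div_mul_div_comm, div_eq_div_iff h3 (mul_ne_zero h1 (mul_ne_zero h3 h2))]
    field_simp
    ring
    rw [mul_assoc (x * x ^ n) a a⁻¹, mul_inv_cancel₀ ha, mul_one]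
  · rcases eq_or_lt_of_le (by omega : v ≤ -1) with hv1 | hv2
    · subst hv1
      norm_num [KnormZ, qPoch]
      ring
    · obtain ⟨n, rfl⟩ : ∃ n : ℕ, v = -((n : ℤ) + 2) := ⟨(-v).toNat - 2, by omega⟩
      have e0 : ¬ (0:ℤ) ≤ -((n:ℤ)+2) := by omega
      have e1 : ¬ (0:ℤ) ≤ -((n:ℤ)+2) + 1 := by omega
      have e2 : (-(-((n:ℤ)+2))).toNat = n+2 := by omega
      have e3 : (-(-((n:ℤ)+2)+1)).toNat = n+1 := by omega
      rw [KnormZ, KnormZ, if_neg e0, if_neg e1, e2, e3]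
      have e4 : (q ^ (-((n:ℤ)+2)))⁻¹ = q ^ (n+2) := by
        rw [← zpow_neg, neg_neg]
        norm_cast
      rw [e4, show n+2 = (n+1)+1 from rfl, qPoch_succ (q*a) q (n+1),
        qPoch_succ' (q*x) q (n+1), div_mul_div_comm]
      ring

/-- One-variable shift relation:
`K_v(x) = ((q^{1-m} a v̄⁻¹;q)_m / (qx;q)_m) · K_{v+m}(q^m x)` where `v̄ = q^v`,
for all `v ∈ ℤ` and `m ∈ ℕ` with `v + m ≥ 0`. -/
theorem stmt14 {F : Type} [Field F] (q a x : F)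
    (hq : q ≠ 0) (ha : a ≠ 0) (hx : x ≠ 0)
    (hpa : ∀ k : ℕ, qPoch a⁻¹ q k ≠ 0)
    (hpx : ∀ k : ℕ, qPoch (q * x) q k ≠ 0)
    (v : ℤ) (m : ℕ) (hvm : 0 ≤ v + m) :
    KnormZ q a v x
      = (qPoch (q ^ ((1 : ℤ) - (m : ℤ)) * a * (q ^ v)⁻¹) q m / qPoch (q * x) q m) *
          KnormZ q a (v + m) (q ^ m * x) := by
  induction m generalizing v x with
  | zero => simp [qPoch]
  | succ m ih =>
    have h1 : (1 : F) - q * x ≠ 0 := by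
      have := hpx 1
      simpa [qPoch] using this
    have hpx' : ∀ k : ℕ, qPoch (q * (q * x)) q k ≠ 0 := by
      intro k
      have := hpx (k + 1)
      rw [qPoch_succ'] at this
      exact right_ne_zero_of_mul this
    have hx' : q * x ≠ 0 := mul_ne_zero hq hx
    rw [step q a x hq ha hx hpa h1 v,
      ih (q * x) hx' hpx' (v + 1) (by push_cast at hvm ⊢; omega)]
    have e1 : v + 1 + (m : ℤ) = v + ((m : ℕ) + 1 : ℕ) := by push_cast; ring
    have e2 : q ^ m * (q * x) = q ^ (m + 1) * x := by ring
    have e3 : q ^ ((1:ℤ) - (m:ℤ)) * a * (q ^ (v+1))⁻¹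
        = q ^ ((1:ℤ) - (((m:ℕ)+1:ℕ):ℤ)) * a * (q ^ v)⁻¹ := by
      have hv : (q:F) ^ v ≠ 0 := zpow_ne_zero v hq
      rw [zpow_add₀ hq v 1, zpow_sub₀ hq, zpow_sub₀ hq]
      push_cast
      rw [zpow_add₀ hq (m:ℤ) 1]
      field_simp
    rw [e1, e2, e3]
    rw [show (m:ℕ)+1 = m+1 from rfl,
      qPoch_succ (q ^ ((1:ℤ) - (((m:ℕ)+1:ℕ):ℤ)) * a * (q ^ v)⁻¹) q m,
      qPoch_succ' (q * x) q m]
    have e4 : (1:F) - q ^ m * (q ^ ((1:ℤ) - (((m:ℕ)+1:ℕ):ℤ)) * a * (q ^ v)⁻¹)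
        = 1 - a * (q ^ v)⁻¹ := by
      have hm : ((1:ℤ) - (((m:ℕ)+1:ℕ):ℤ)) = -(m:ℤ) := by push_cast; ring
      rw [hm, zpow_neg, ← zpow_natCast q m]
      have hqm : (q:F) ^ (m:ℤ) ≠ 0 := zpow_ne_zero _ hq
      congr 1
      field_simp
    rw [e4]
    have hB := hpx' m
    have hqv : (q:F) ^ v ≠ 0 := zpow_ne_zero v hq
    field_simp
end

section
/- Define $A_m(x;v) := \prod_{i=1}^n \frac{(q^{1-m} a\, \overline{v}_i^{-1}; q)_m}{(q t^{n-1} x_i; q)_m}$ for $v\in\mathbb{Z}^n$ and a tuple $x$ of variables, where $(y;q)_m=\prod_{j=0}^{m-1}(1-q^jy)$. Let $\widetilde{v} := \overline{-w_0 v}$, so that $\widetilde{v}_i = t^{1-n}\overline{v}_{n+1-i}^{-1}$. Then for all $u,v\in\mathbb{Z}^n$ and $m\in\mathbb{Z}_{\geq 0}$: $A_m(a\widetilde{v}; u)\cdot A_m(q^{-m} a \widetilde{u};\, v - (m,\ldots,m)) = 1$. -/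
open Finset

/-- `ṽ = overline{-w₀v}`, where `w₀` reverses the entries. -/
noncomputable def vtilde {F : Type} [Field F] (q t : F) {n : ℕ} (v : Fin n → ℤ)
    (i : Fin n) : F :=
  vbar q t (fun j : Fin n => -(v ⟨n - 1 - (j : ℕ), by have := j.isLt; omega⟩)) i

/-- `A_m(x;v) = ∏_{i=1}^n (q^{1-m} a v̄_i⁻¹;q)_m / (q t^{n-1} x_i;q)_m`. -/
noncomputable def Am {F : Type} [Field F] (q t a : F) {n : ℕ} (m : ℕ)
    (x : Fin n → F) (v : Fin n → ℤ) : F :=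
  ∏ i : Fin n,
    qPoch (q ^ ((1 : ℤ) - (m : ℤ)) * a * (vbar q t v i)⁻¹) q m /
      qPoch (q * t ^ ((n : ℤ) - 1) * x i) q m

/-! Since `t^{n-1} ṽᵢ = (v̄_{w₀ i})⁻¹` and `v̄` of `v - (m,…,m)` is `q^{-m} v̄`, the denominator of
the `i`-th factor of each `A_m` is the numerator of the `w₀ i`-th factor of the other, so the
product of the two collapses to `1` after reindexing by `w₀`. -/

lemma vtilde_eq_vbar_neg_rev {F : Type} [Field F] (q t : F) {n : ℕ} (v : Fin n → ℤ) :
    vtilde q t v = vbar q t (fun k => -v k.rev) := by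
  funext i
  unfold vtilde
  congr! 4 with k
  ext
  simp only [Fin.val_rev]
  omega

lemma kwt_sub_const {n : ℕ} (v : Fin n → ℤ) (c : ℤ) : kwt (fun j => v j - c) = kwt v := by
  funext i
  simp only [kwt, sub_le_sub_iff_right, sub_lt_sub_iff_right]

/- With `i = j.rev`, every `k ≠ j` is counted exactly once: on each side of `j`, by one of
`kwt v j` and `kwt (-v ∘ rev) i`, according to how `v k` compares with `v j`. -/
lemma kwt_neg_comp_rev_add_kwt {n : ℕ} (v : Fin n → ℤ) (i : Fin n) :
    kwt (fun k => -v k.rev) i + kwt v i.rev = n - 1 := by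
  have card_split (p r : Fin n → Prop) [DecidablePred p] [DecidablePred r] :
      #{k | p k ∧ r k} + #{k | p k ∧ ¬r k} = #{k | p k} := by
    rw [← filter_filter, ← filter_filter]
    exact card_filter_add_card_filter_not _
  have reindex (p : Fin n → Prop) [DecidablePred p] :
      #(univ.filter fun k : Fin n => p k.rev) = #{k | p k} :=
    card_equiv Fin.revPerm (by simp)
  obtain ⟨j, rfl⟩ := Fin.rev_surjective i
  simp only [kwt, neg_le_neg_iff, neg_lt_neg_iff]
  rw [← reindex, ← reindex (fun k => j.rev < k ∧ _)]
  simp only [Fin.rev_rev, Fin.rev_lt_rev]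
  have hlt : #{k | k < j ∧ v j ≤ v k} + #{k | k < j ∧ v k < v j} = j := by
    simpa only [not_le, filter_gt_eq_Iio, Fin.card_Iio] using
      card_split (· < j) (fun k => v j ≤ v k)
  have hgt : #{k | j < k ∧ v j < v k} + #{k | j < k ∧ v k ≤ v j} = n - 1 - j := by
    simpa only [not_lt, filter_lt_eq_Ioi, Fin.card_Ioi] using
      card_split (j < ·) (fun k => v j < v k)
  omega

lemma vbar_sub_const {F : Type} [Field F] (q t : F) (hq : q ≠ 0) {n : ℕ} (v : Fin n → ℤ)
    (c : ℤ) (i : Fin n) : vbar q t (fun j => v j - c) i = q ^ (-c) * vbar q t v i := by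
  rw [vbar, vbar, kwt_sub_const, sub_eq_neg_add, zpow_add₀ hq, mul_assoc]

lemma zpow_sub_one_mul_vtilde {F : Type} [Field F] (q t : F) (ht : t ≠ 0) {n : ℕ}
    (v : Fin n → ℤ) (i : Fin n) :
    t ^ ((n : ℤ) - 1) * vtilde q t v i = (vbar q t v i.rev)⁻¹ := by
  have hn : ((n : ℤ) - 1) = kwt (fun k => -v k.rev) i + kwt v i.rev := by
    have := kwt_neg_comp_rev_add_kwt v i
    have := i.pos
    omega
  rw [vtilde_eq_vbar_neg_rev, hn, zpow_add₀ ht]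
  simp only [vbar, zpow_neg]
  field_simp

lemma prod_div_comp_mul_prod_div_comp {ι F : Type} [Fintype ι] [Field F] (e : Equiv.Perm ι)
    (f g : ι → F) (hf : ∀ i, f i ≠ 0) (hg : ∀ i, g i ≠ 0) :
    (∏ i, f i / g (e i)) * ∏ i, g i / f (e i) = 1 := by
  rw [prod_div_distrib, prod_div_distrib, Equiv.prod_comp e, Equiv.prod_comp e,
    div_mul_div_cancel₀ (prod_ne_zero_iff.2 fun i _ => hg i),
    div_self (prod_ne_zero_iff.2 fun i _ => hf i)]

theorem stmt15_general {F : Type} [Field F] (q t a : F)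
    (hq : q ≠ 0) (ht : t ≠ 0)
    {n : ℕ} (u v : Fin n → ℤ) (m : ℕ)
    (h1 : ∀ i : Fin n,
      qPoch (q * t ^ ((n : ℤ) - 1) * (a * vtilde q t v i)) q m ≠ 0)
    (h2 : ∀ i : Fin n,
      qPoch (q * t ^ ((n : ℤ) - 1) *
        (q ^ (-(m : ℤ)) * a * vtilde q t u i)) q m ≠ 0) :
    Am q t a m (fun i => a * vtilde q t v i) u *
      Am q t a m (fun i => q ^ (-(m : ℤ)) * a * vtilde q t u i)
        (fun i => v i - m) = 1 := by
  set N : (Fin n → ℤ) → Fin n → F :=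
    fun w i => qPoch (q ^ ((1 : ℤ) - m) * a * (vbar q t w i)⁻¹) q m
  have hq1 : q ^ ((1 : ℤ) - m) = q * q ^ (-(m : ℤ)) := by
    rw [sub_eq_add_neg, zpow_add₀ hq, zpow_one]
  have hv : ∀ i, q * t ^ ((n : ℤ) - 1) * (a * vtilde q t v i) =
      q ^ ((1 : ℤ) - m) * a * (vbar q t (fun j => v j - m) i.rev)⁻¹ := by
    intro i
    rw [vbar_sub_const q t hq, hq1, mul_inv, ← zpow_neg, neg_neg,
      ← zpow_sub_one_mul_vtilde q t ht, zpow_neg, zpow_natCast]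
    field_simp
  have hu : ∀ i, q * t ^ ((n : ℤ) - 1) * (q ^ (-(m : ℤ)) * a * vtilde q t u i) =
      q ^ ((1 : ℤ) - m) * a * (vbar q t u i.rev)⁻¹ := by
    intro i
    rw [hq1, ← zpow_sub_one_mul_vtilde q t ht]
    ring
  have hA_u : Am q t a m (fun i => a * vtilde q t v i) u =
      ∏ i, N u i / N (fun j => v j - m) i.rev := by
    simp only [Am, hv, N]
  have hA_v : Am q t a m (fun i => q ^ (-(m : ℤ)) * a * vtilde q t u i) (fun i => v i - m) =
      ∏ i, N (fun j => v j - m) i / N u i.rev := by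
    simp only [Am, hu, N]
  rw [hA_u, hA_v]
  refine prod_div_comp_mul_prod_div_comp Fin.revPerm _ _ (fun i => ?_) (fun i => ?_)
  · simpa only [hu, Fin.rev_rev] using h2 i.rev
  · simpa only [hv, Fin.rev_rev] using h1 i.rev

/-- `A_m(aṽ;u) · A_m(q^{-m} a ũ; v - (m,…,m)) = 1`. -/
theorem stmt15 {F : Type} [Field F] (q t a : F)
    (hq : q ≠ 0) (ht : t ≠ 0) (ha : a ≠ 0)
    {n : ℕ} (u v : Fin n → ℤ) (m : ℕ)
    (h1 : ∀ i : Fin n,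
      qPoch (q * t ^ ((n : ℤ) - 1) * (a * vtilde q t v i)) q m ≠ 0)
    (h2 : ∀ i : Fin n,
      qPoch (q * t ^ ((n : ℤ) - 1) *
        (q ^ (-(m : ℤ)) * a * vtilde q t u i)) q m ≠ 0) :
    Am q t a m (fun i => a * vtilde q t v i) u *
      Am q t a m (fun i => q ^ (-(m : ℤ)) * a * vtilde q t u i)
        (fun i => v i - m) = 1 :=
  stmt15_general q t a hq ht u v m h1 h2
end

section
/- For a composition $\alpha\in(\mathbb{Z}_{\geq 0})^n$ with non-increasing rearrangement $\alpha^+$, define $n(\alpha) := \sum_{s\in\alpha} l(s)$ where for a cell $s=(i,j)$ of the diagram of $\alpha$ the leg is $l(s) := \#\{k>i : j\leq \alpha_k\leq\alpha_i\} + \#\{k<i : j\leq \alpha_k+1\leq\alpha_i\}$. Then $n(\alpha) = n(\alpha^+) + \binom{n}{2} - I(\alpha)$, where $I(\alpha) = \#\{(i,j): i<j,\ \alpha_i\geq\alpha_j\}$. -/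
/-!
Split the leg sum by pairs of rows `i < k`: the pair contributes `min (α i) (α k)`, plus one
more when `α i < α k`. The sum of minima over pairs is invariant under permuting the parts,
and the extra ones count the strict ascents of `α`, of which there are
`C(n,2) - I(α)`, and none for `α⁺`.
-/

open Finset

/-- `n(α) = ∑_{s∈α} l(s)`: for a cell `s = (i,j)` of the diagram of `α`
(`1 ≤ j ≤ α_i`, here `j` runs through `Finset.range (α i)` and represents the
1-based column `j+1`), the leg is
`l(s) = #{k>i : j ≤ α_k ≤ α_i} + #{k<i : j ≤ α_k + 1 ≤ α_i}`. -/
def legSum {n : ℕ} (α : Fin n → ℕ) : ℕ :=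
  ∑ i : Fin n, ∑ j ∈ Finset.range (α i),
    (((univ : Finset (Fin n)).filter
        (fun k => i < k ∧ j + 1 ≤ α k ∧ α k ≤ α i)).card +
     ((univ : Finset (Fin n)).filter
        (fun k => k < i ∧ j + 1 ≤ α k + 1 ∧ α k + 1 ≤ α i)).card)

lemma Finset.sum_range_card_filter_lt {ι : Type*} (s : Finset ι) (P : ι → Prop) [DecidablePred P]
    (f : ι → ℕ) {a : ℕ} (hf : ∀ k ∈ s, P k → f k ≤ a) :
    ∑ j ∈ range a, #{k ∈ s | P k ∧ j < f k} = ∑ k ∈ s with P k, f k := by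
  rw [sum_filter]
  refine (sum_card_bipartiteAbove_eq_sum_card_bipartiteBelow (r := fun j k => P k ∧ j < f k)).trans
    (sum_congr rfl fun k hk => ?_)
  split_ifs with hP
  · rw [bipartiteBelow, filter_congr (q := (· < f k)) (by simp [hP]),
      range_eq_Ico, Ico_filter_lt, min_eq_right (hf k hk hP), Nat.card_Ico, Nat.sub_zero]
  · simp [bipartiteBelow, hP]

lemma Finset.sum_filter_lt_comp_perm {ι M : Type*} [LinearOrder ι] [Fintype ι] [AddCommMonoid M]
    (g : ι → ι → M) (hg : ∀ i k, g i k = g k i) (σ : Equiv.Perm ι) :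
    ∑ p : ι × ι with p.1 < p.2, g (σ p.1) (σ p.2) = ∑ p : ι × ι with p.1 < p.2, g p.1 p.2 := by
  let G : Sym2 ι → M := Sym2.lift ⟨g, hg⟩
  have hsym2 (f : ι → ι) : ∑ p : ι × ι with p.1 < p.2, g (f p.1) (f p.2) =
      ∑ z ∈ (univ : Finset (Sym2 ι)) with ¬ z.IsDiag, G (z.map f) := by
    rw [← sym2_univ, sum_sym2_filter_not_isDiag]
    refine sum_congr ?_ fun _ _ => rfl
    ext p; simpa using ne_of_lt
  calc _ = ∑ z ∈ (univ : Finset (Sym2 ι)) with ¬ z.IsDiag, G (z.map σ) := hsym2 σ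
    _ = ∑ z ∈ (univ : Finset (Sym2 ι)) with ¬ z.IsDiag, G (z.map id) :=
      sum_nbij' (Sym2.map σ) (Sym2.map σ.symm) (by simp [Sym2.isDiag_map σ.injective])
        (by simp [Sym2.isDiag_map σ.symm.injective])
        (by simp [Sym2.map_map]) (by simp [Sym2.map_map]) (by simp [Sym2.map_map])
    _ = _ := (hsym2 id).symm

lemma Finset.card_filter_lt_le_add_card_filter_lt_lt {ι β : Type*} [LinearOrder ι] [Fintype ι]
    [LinearOrder β] (f : ι → β) :
    #{p : ι × ι | p.1 < p.2 ∧ f p.2 ≤ f p.1} + #{p : ι × ι | p.1 < p.2 ∧ f p.1 < f p.2} =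
      (Fintype.card ι).choose 2 := by
  simp_rw [← filter_filter, ← not_le (a := f _)]
  rw [card_filter_add_card_filter_not, ← univ_product_univ, card_product_filter_lt, card_univ]

lemma legSum_eq_sum_row {n : ℕ} (α : Fin n → ℕ) :
    legSum α = ∑ i, ((∑ k with i < k ∧ α k ≤ α i, α k) +
      ∑ k with k < i ∧ α k + 1 ≤ α i, (α k + 1)) := by
  refine sum_congr rfl fun i _ => ?_
  rw [sum_add_distrib, ← sum_range_card_filter_lt _ _ _ fun k _ h => h.2,
    ← sum_range_card_filter_lt _ _ _ fun k _ h => h.2]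
  congr 1 <;> exact sum_congr rfl fun j _ => congrArg card <| filter_congr fun k _ => by omega

lemma legSum_eq_sum_min_add_card {n : ℕ} (α : Fin n → ℕ) :
    legSum α = ∑ p : Fin n × Fin n with p.1 < p.2, min (α p.1) (α p.2) +
      #{p : Fin n × Fin n | p.1 < p.2 ∧ α p.1 < α p.2} := by
  calc legSum α = ∑ i, ∑ k, ((if i < k ∧ α k ≤ α i then α k else 0) +
        (if k < i ∧ α k + 1 ≤ α i then α k + 1 else 0)) := by
        rw [legSum_eq_sum_row]
        exact sum_congr rfl fun i _ => by rw [sum_filter, sum_filter, sum_add_distrib]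
    _ = ∑ i, ∑ k, ((if i < k ∧ α k ≤ α i then α k else 0) +
        (if i < k ∧ α i + 1 ≤ α k then α i + 1 else 0)) := by
        simp only [sum_add_distrib]
        rw [sum_comm (f := fun i k => if k < i ∧ α k + 1 ≤ α i then α k + 1 else 0)]
    _ = ∑ p : Fin n × Fin n,
        if p.1 < p.2 then min (α p.1) (α p.2) + (if α p.1 < α p.2 then 1 else 0) else 0 := by
        rw [Fintype.sum_prod_type]
        refine sum_congr rfl fun i _ => sum_congr rfl fun k _ => ?_
        dsimp only
        split_ifs <;> omega
    _ = _ := by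
        rw [← sum_filter, sum_add_distrib, sum_boole, filter_filter, Nat.cast_id]

/-- `n(α) = n(α⁺) + C(n,2) - I(α)`, where `α⁺` (given by a permutation `σ` of
the parts yielding a weakly decreasing tuple) is the non-increasing
rearrangement of `α` and `I(α) = #{(i,j) : i<j, α_i ≥ α_j}`. -/
theorem stmt17 {n : ℕ} (α : Fin n → ℕ) (σ : Equiv.Perm (Fin n))
    (hσ : Antitone fun i => α (σ i)) :
    legSum α = legSum (fun i => α (σ i)) + n.choose 2 -
      ((univ : Finset (Fin n × Fin n)).filter
        (fun p => p.1 < p.2 ∧ α p.2 ≤ α p.1)).card := by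
  have hsorted : #{p : Fin n × Fin n | p.1 < p.2 ∧ α (σ p.1) < α (σ p.2)} = 0 :=
    card_eq_zero.2 <| filter_eq_empty_iff.2 fun p _ h => (hσ h.1.le).not_gt h.2
  have hmin := sum_filter_lt_comp_perm (fun i k => min (α i) (α k)) (fun _ _ => min_comm _ _) σ
  have hcount := card_filter_lt_le_add_card_filter_lt_lt α
  rw [Fintype.card_fin] at hcount
  rw [legSum_eq_sum_min_add_card, legSum_eq_sum_min_add_card, hsorted, hmin]
  omega
end
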